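/- Let f be a probability density on ℝ that vanishes on (−∞, a), is bounded by f_max < ∞, and has a right limit f(a⁺) = lim_{y → a⁺} f(y) ∈ [0, ∞). Let σ be the logistic sigmoid, K_β(u) = σ'(u/β)/β, and f_β = f * K_β. Then for every fixed t ∈ ℝ, f_β(a + β t) → f(a⁺) σ(t) as β → 0⁺. -/

import Mathlib

open MeasureTheory Filter Set

/-- The logistic sigmoid `σ(z) = 1 / (1 + e^{-z})`. -/
noncomputable def sigmoid (z : ℝ) : ℝ := (1 + Real.exp (-z))⁻¹

/-- The logistic smoothing kernel `K_β(u) = σ'(u/β) / β`. -/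
noncomputable def Kker (β u : ℝ) : ℝ := deriv sigmoid (u / β) / β

/-- The β-smoothed (convolved) density `f_β(z) = (f * K_β)(z) = ∫ f(y) K_β(z - y) dy`. -/
noncomputable def smoothed (f : ℝ → ℝ) (β z : ℝ) : ℝ := ∫ y, f y * Kker β (z - y)

/-- Explicit formula for the derivative of the sigmoid. -/
noncomputable def sig' (z : ℝ) : ℝ := Real.exp (-z) / (1 + Real.exp (-z)) ^ 2

lemma one_add_exp_pos (z : ℝ) : 0 < 1 + Real.exp (-z) := by positivity

lemma hasDerivAt_sigmoid (z : ℝ) : HasDerivAt sigmoid (sig' z) z := by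
  have h1 : HasDerivAt (fun w : ℝ => 1 + Real.exp (-w)) (-Real.exp (-z)) z := by
    have := (Real.hasDerivAt_exp (-z)).comp z (hasDerivAt_neg z)
    simpa [mul_comm] using this.const_add 1
  have h2 := h1.inv (ne_of_gt (one_add_exp_pos z))
  rw [show sigmoid = (fun w : ℝ => 1 + Real.exp (-w))⁻¹ from rfl]
  simpa [sigmoid, sig', div_eq_mul_inv, neg_neg] using h2

lemma deriv_sigmoid (z : ℝ) : deriv sigmoid z = sig' z :=
  (hasDerivAt_sigmoid z).deriv

lemma sig'_nonneg (z : ℝ) : 0 ≤ sig' z := by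
  unfold sig'; positivity

lemma sig'_le_exp_neg (z : ℝ) : sig' z ≤ Real.exp (-z) := by
  unfold sig'
  have h1 : (1 : ℝ) ≤ (1 + Real.exp (-z)) ^ 2 := by
    have := (Real.exp_pos (-z)).le
    nlinarith
  calc Real.exp (-z) / (1 + Real.exp (-z)) ^ 2 ≤ Real.exp (-z) / 1 :=
        div_le_div_of_nonneg_left (Real.exp_pos _).le one_pos h1
    _ = Real.exp (-z) := by ring

lemma sig'_le_exp (z : ℝ) : sig' z ≤ Real.exp z := by
  unfold sig'
  have h1 : Real.exp (-z) ^ 2 ≤ (1 + Real.exp (-z)) ^ 2 := by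
    have := (Real.exp_pos (-z)).le
    nlinarith
  have h2 : (0:ℝ) < Real.exp (-z) ^ 2 := by positivity
  calc Real.exp (-z) / (1 + Real.exp (-z)) ^ 2 ≤ Real.exp (-z) / Real.exp (-z) ^ 2 :=
        div_le_div_of_nonneg_left (Real.exp_pos _).le h2 h1
    _ = (Real.exp (-z))⁻¹ := by
        rw [sq, div_mul_eq_div_div, div_self (Real.exp_pos _).ne', one_div]
    _ = Real.exp z := by rw [← Real.exp_neg, neg_neg]

lemma continuous_sig' : Continuous sig' := by
  unfold sig'
  exact (Real.continuous_exp.comp continuous_neg).div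
    ((continuous_const.add (Real.continuous_exp.comp continuous_neg)).pow 2)
    (fun z => by positivity)

lemma integrable_sig' : Integrable sig' := by
  have hmeas : AEStronglyMeasurable sig' volume := continuous_sig'.aestronglyMeasurable
  have hIoi : IntegrableOn sig' (Ioi (0:ℝ)) := by
    have h : IntegrableOn (fun x : ℝ => Real.exp (-1 * x)) (Ioi (0:ℝ)) :=
      exp_neg_integrableOn_Ioi 0 one_pos
    refine Integrable.mono' h hmeas.restrict ?_
    filter_upwards [] with z
    rw [Real.norm_eq_abs, abs_of_nonneg (sig'_nonneg z)]
    simpa using sig'_le_exp_neg z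
  have hIic : IntegrableOn sig' (Iic (0:ℝ)) := by
    have h : IntegrableOn Real.exp (Iic (0:ℝ)) := integrableOn_exp_Iic 0
    refine Integrable.mono' h hmeas.restrict ?_
    filter_upwards [] with z
    rw [Real.norm_eq_abs, abs_of_nonneg (sig'_nonneg z)]
    exact sig'_le_exp z
  have := hIic.union hIoi
  rwa [Iic_union_Ioi, integrableOn_univ] at this

lemma sigmoid_tendsto_zero : Tendsto sigmoid atBot (nhds 0) := by
  have h : Tendsto (fun z : ℝ => 1 + Real.exp (-z)) atBot atTop :=
    tendsto_atTop_add_const_left _ 1 (Real.tendsto_exp_atTop.comp tendsto_neg_atBot_atTop)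
  rw [show sigmoid = (fun z : ℝ => 1 + Real.exp (-z))⁻¹ from rfl]
  exact h.inv_tendsto_atTop

lemma integral_sig'_Ioi (t : ℝ) : ∫ s in Ioi (0:ℝ), sig' (t - s) = sigmoid t := by
  have hderiv : ∀ s ∈ Ici (0:ℝ), HasDerivAt (fun s => -sigmoid (t - s)) (sig' (t - s)) s := by
    intro s _
    have h1 : HasDerivAt (fun s : ℝ => t - s) (-1) s := by
      simpa using (hasDerivAt_id s).const_sub t
    have h2 := (hasDerivAt_sigmoid (t - s)).comp s h1
    have h3 := h2.neg
    simp only [mul_neg, mul_one, neg_neg] at h3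
    exact h3
  have hint : IntegrableOn (fun s => sig' (t - s)) (Ioi 0) :=
    (integrable_sig'.comp_sub_left t).integrableOn
  have htend : Tendsto (fun s : ℝ => -sigmoid (t - s)) atTop (nhds 0) := by
    have h : Tendsto (fun s : ℝ => t - s) atTop atBot := by
      simpa [sub_eq_add_neg] using tendsto_atBot_add_const_left atTop t tendsto_neg_atTop_atBot
    simpa using (sigmoid_tendsto_zero.comp h).neg
  have := integral_Ioi_of_hasDerivAt_of_tendsto' hderiv hint htend
  simpa using this

/-- **Boundary scaling of the smoothed density.**
If the probability density `f` vanishes on `(-∞, a)`, is bounded by `fmax`, and has a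
right limit `f(a⁺) = fa ∈ [0, ∞)` at `a`, then for every fixed `t ∈ ℝ`,
`f_β(a + β t) → fa ⋅ σ(t)` as `β → 0⁺`. -/
theorem boundary_scaling_smoothed_density
    (f : ℝ → ℝ) (a : ℝ)
    (hf_nonneg : ∀ y, 0 ≤ f y) (hf_int : Integrable f) (hf_one : ∫ y, f y = 1)
    (hzero : ∀ y : ℝ, y < a → f y = 0)
    (fmax : ℝ) (hfmax : ∀ y, f y ≤ fmax)
    (fa : ℝ) (hfa_nonneg : 0 ≤ fa)
    (hfa : Tendsto f (nhdsWithin a (Set.Ioi a)) (nhds fa))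
    (t : ℝ) :
    Tendsto (fun β => smoothed f β (a + β * t)) (nhdsWithin 0 (Set.Ioi 0))
      (nhds (fa * sigmoid t)) := by
  set sF : ℝ → ℝ → ℝ := fun β s => f (a + β * s) * sig' (t - s) with hsF
  set F0 : ℝ → ℝ := fun s => (Set.Ioi (0:ℝ)).indicator (fun _ => fa) s * sig' (t - s) with hF0
  -- dominated convergence
  have key : Tendsto (fun β => ∫ s, sF β s) (nhdsWithin 0 (Set.Ioi 0)) (nhds (∫ s, F0 s)) := by
    apply tendsto_integral_filter_of_dominated_convergence (fun s => fmax * sig' (t - s))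
    · filter_upwards [self_mem_nhdsWithin] with β hβ
      have hβ0 : (β:ℝ) ≠ 0 := ne_of_gt hβ
      have h1 : Integrable fun s => f (a + β * s) :=
        (hf_int.comp_add_left a).comp_mul_left' hβ0
      exact h1.aestronglyMeasurable.mul
        ((continuous_sig'.comp (continuous_const.sub continuous_id)).aestronglyMeasurable)
    · filter_upwards [] with β
      filter_upwards [] with s
      rw [Real.norm_eq_abs, hsF,
        abs_of_nonneg (mul_nonneg (hf_nonneg _) (sig'_nonneg _))]
      exact mul_le_mul_of_nonneg_right (hfmax _) (sig'_nonneg _)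
    · exact (integrable_sig'.comp_sub_left t).const_mul fmax
    · have hae : ∀ᵐ s : ℝ, s ≠ 0 := by
        rw [ae_iff]
        have h : {s : ℝ | ¬ s ≠ 0} = {0} := by ext x; simp
        rw [h]
        exact measure_singleton 0
      filter_upwards [hae] with s hs
      rcases lt_or_gt_of_ne hs with hneg | hpos
      · have hF0s : F0 s = 0 := by
          rw [hF0]
          simp only [indicator_of_notMem (by simpa using hneg.not_gt : s ∉ Ioi (0:ℝ)),
            zero_mul]
        rw [hF0s]
        apply tendsto_const_nhds.congr'
        filter_upwards [self_mem_nhdsWithin] with β hβ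
        have hlt : a + β * s < a := by nlinarith [mem_Ioi.1 hβ]
        simp [hsF, hzero _ hlt]
      · have hF0s : F0 s = fa * sig' (t - s) := by
          rw [hF0]
          simp only [indicator_of_mem (mem_Ioi.2 hpos)]
        rw [hF0s]
        have h1 : Tendsto (fun β : ℝ => a + β * s) (nhdsWithin 0 (Set.Ioi 0))
            (nhdsWithin a (Set.Ioi a)) := by
          apply tendsto_nhdsWithin_of_tendsto_nhds_of_eventually_within
          · have h2 : Tendsto (fun β : ℝ => a + β * s) (nhds 0) (nhds (a + 0 * s)) :=
              (continuous_const.add (continuous_id.mul continuous_const)).tendsto 0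
            simpa using h2.mono_left nhdsWithin_le_nhds
          · filter_upwards [self_mem_nhdsWithin] with β hβ
            exact mem_Ioi.2 (by nlinarith [mem_Ioi.1 hβ])
        exact (hfa.comp h1).mul_const _
  -- value of the limit integral
  have hval : ∫ s, F0 s = fa * sigmoid t := by
    have h : F0 = (Ioi (0:ℝ)).indicator (fun s => fa * sig' (t - s)) := by
      funext s
      by_cases h : s ∈ Ioi (0:ℝ)
      · rw [hF0]; simp only [indicator_of_mem h]
      · rw [hF0]; simp only [indicator_of_notMem h, zero_mul]
    rw [h, integral_indicator measurableSet_Ioi, integral_const_mul, integral_sig'_Ioi]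
  rw [← hval]
  -- change of variables: smoothed f β (a + β t) = ∫ s, sF β s for β > 0
  apply key.congr'
  filter_upwards [self_mem_nhdsWithin] with β hβ
  have hβ0 : (β:ℝ) ≠ 0 := ne_of_gt (mem_Ioi.1 hβ)
  set g : ℝ → ℝ := fun y => f y * Kker β (a + β * t - y) with hg
  have hgs : ∀ s : ℝ, g (a + β * s) = sF β s / β := by
    intro s
    have e1 : a + β * t - (a + β * s) = β * (t - s) := by ring
    have e2 : Kker β (β * (t - s)) = sig' (t - s) / β := by
      rw [Kker, mul_div_cancel_left₀ _ hβ0, deriv_sigmoid]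
    rw [hg]
    simp only [e1, e2, hsF]
    ring
  have e3 : ∫ x, g (a + β * x) = |β⁻¹| • ∫ u, g (a + u) :=
    Measure.integral_comp_mul_left (fun u => g (a + u)) β
  have e4 : ∫ u, g (a + u) = ∫ y, g y := integral_add_left_eq_self g a
  have e5 : ∫ x, g (a + β * x) = (∫ x, sF β x) / β := by
    simp_rw [hgs]
    exact integral_div β (fun x => sF β x)
  have e6 : smoothed f β (a + β * t) = ∫ y, g y := rfl
  rw [e6, ← e4]
  have e7 : (∫ x, sF β x) / β = β⁻¹ * ∫ u, g (a + u) := by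
    rw [← e5, e3, abs_of_pos (inv_pos.2 (mem_Ioi.1 hβ)), smul_eq_mul]
  field_simp at e7
  linarith
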